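/- Let M be a quaternionic n×n matrix, α ∈ ℍ, and let r ≠ k be row indices (resp. column indices). If N is obtained from M by replacing row r with (row r) + α·(row k) (left-multiplication by α), then Sdet(N) = Sdet(M). Similarly, if N is obtained from M by replacing column r with (column r) + (column k)·α (right-multiplication by α), then Sdet(N) = Sdet(M). -/

import Mathlib

open scoped Quaternion

/-- The simplex part of a quaternion `x = a + j·b`: the complex number `a = x₀ + x₁·i`. -/
noncomputable def qSimplex (x : ℍ[ℝ]) : ℂ := ⟨x.re, x.imI⟩

/-- The perplex part of a quaternion `x = a + j·b`: the complex number `b = x₂ − x₃·i`. -/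
noncomputable def qPerplex (x : ℍ[ℝ]) : ℂ := ⟨x.imJ, -x.imK⟩

/-- The simplex part of a quaternionic matrix. -/
noncomputable def matSimplex {α β : Type*} (M : Matrix α β ℍ[ℝ]) : Matrix α β ℂ :=
  Matrix.of fun r s => qSimplex (M r s)

/-- The perplex part of a quaternionic matrix. -/
noncomputable def matPerplex {α β : Type*} (M : Matrix α β ℍ[ℝ]) : Matrix α β ℂ :=
  Matrix.of fun r s => qPerplex (M r s)

/-- The complex-block representation `ψ(M) = [[Mˢ, −conj(Mᵖ)], [Mᵖ, conj(Mˢ)]]`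
of a quaternionic matrix `M = Mˢ + j·Mᵖ`. -/
noncomputable def psi {α β : Type*} (M : Matrix α β ℍ[ℝ]) : Matrix (α ⊕ α) (β ⊕ β) ℂ :=
  Matrix.fromBlocks (matSimplex M) (-(matPerplex M).map (starRingEnd ℂ))
    (matPerplex M) ((matSimplex M).map (starRingEnd ℂ))

/-- The Study determinant of a square quaternionic matrix: `Sdet(M) = det(ψ(M))`. -/
noncomputable def Sdet {α : Type*} [Fintype α] [DecidableEq α] (M : Matrix α α ℍ[ℝ]) : ℂ :=
  (psi M).det

/-!
`ψ` is additive and multiplicative (also on rectangular matrices), so `Sdet` is multiplicative.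
The row operation is left multiplication by `1 + α E_{rk}`, the column operation right
multiplication by `1 + α E_{kr}`, so it suffices that `Sdet (1 + α E_{rk}) = 1` for `r ≠ k`.
Factor `α E_{rk} = u * v` through a `1 × 1` matrix: Sylvester's identity
`det (1 + ψu ψv) = det (1 + ψv ψu) = det (1 + ψ(v u))` finishes, since `v * u = 0` when `r ≠ k`.
-/

open Matrix

lemma qSimplex_add (x y : ℍ[ℝ]) : qSimplex (x + y) = qSimplex x + qSimplex y := by
  simp [qSimplex, Complex.ext_iff]

lemma qPerplex_add (x y : ℍ[ℝ]) : qPerplex (x + y) = qPerplex x + qPerplex y := by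
  simp [qPerplex, Complex.ext_iff]
  ring

lemma qSimplex_sum {ι : Type*} (s : Finset ι) (f : ι → ℍ[ℝ]) :
    qSimplex (∑ i ∈ s, f i) = ∑ i ∈ s, qSimplex (f i) :=
  map_sum (AddMonoidHom.mk' qSimplex qSimplex_add) f s

lemma qPerplex_sum {ι : Type*} (s : Finset ι) (f : ι → ℍ[ℝ]) :
    qPerplex (∑ i ∈ s, f i) = ∑ i ∈ s, qPerplex (f i) :=
  map_sum (AddMonoidHom.mk' qPerplex qPerplex_add) f s

lemma qSimplex_mul (x y : ℍ[ℝ]) :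
    qSimplex (x * y) = qSimplex x * qSimplex y - starRingEnd ℂ (qPerplex x) * qPerplex y := by
  apply Complex.ext <;> simp [qSimplex, qPerplex, Quaternion.re_mul, Quaternion.imI_mul] <;> ring

lemma qPerplex_mul (x y : ℍ[ℝ]) :
    qPerplex (x * y) = qPerplex x * qSimplex y + starRingEnd ℂ (qSimplex x) * qPerplex y := by
  apply Complex.ext <;> simp [qSimplex, qPerplex, Quaternion.imJ_mul, Quaternion.imK_mul] <;> ring

section Matrices

variable {l m n : Type*}

lemma matSimplex_add (A B : Matrix m n ℍ[ℝ]) :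
    matSimplex (A + B) = matSimplex A + matSimplex B := by
  ext i j
  exact qSimplex_add _ _

lemma matPerplex_add (A B : Matrix m n ℍ[ℝ]) :
    matPerplex (A + B) = matPerplex A + matPerplex B := by
  ext i j
  exact qPerplex_add _ _

lemma matSimplex_mul [Fintype m] (A : Matrix l m ℍ[ℝ]) (B : Matrix m n ℍ[ℝ]) :
    matSimplex (A * B) =
      matSimplex A * matSimplex B - (matPerplex A).map (starRingEnd ℂ) * matPerplex B := by
  ext i j
  simp [matSimplex, matPerplex, mul_apply, qSimplex_sum, qSimplex_mul]

lemma matPerplex_mul [Fintype m] (A : Matrix l m ℍ[ℝ]) (B : Matrix m n ℍ[ℝ]) :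
    matPerplex (A * B) =
      matPerplex A * matSimplex B + (matSimplex A).map (starRingEnd ℂ) * matPerplex B := by
  ext i j
  simp [matSimplex, matPerplex, mul_apply, qPerplex_sum, qPerplex_mul, Finset.sum_add_distrib]

lemma psi_zero : psi (0 : Matrix m n ℍ[ℝ]) = 0 := by
  ext (i | i) (j | j) <;> simp [psi, matSimplex, matPerplex, qSimplex, qPerplex, Complex.ext_iff]

lemma psi_one [DecidableEq n] : psi (1 : Matrix n n ℍ[ℝ]) = 1 := by
  ext (i | i) (j | j) <;> by_cases h : i = j <;>
    simp [psi, matSimplex, matPerplex, qSimplex, qPerplex, one_apply, h, Complex.ext_iff]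

lemma psi_add (A B : Matrix m n ℍ[ℝ]) : psi (A + B) = psi A + psi B := by
  simp only [psi, matSimplex_add, matPerplex_add, Matrix.map_add _ (map_add _), neg_add,
    fromBlocks_add]

lemma psi_mul [Fintype m] (A : Matrix l m ℍ[ℝ]) (B : Matrix m n ℍ[ℝ]) :
    psi (A * B) = psi A * psi B := by
  simp only [psi, fromBlocks_multiply, matSimplex_mul, matPerplex_mul,
    Matrix.map_sub _ (map_sub _), Matrix.map_add _ (map_add _), Matrix.map_mul, Matrix.map_map]
  simp only [Function.comp_def, Complex.conj_conj, Matrix.map_id']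
  congr 1 <;> simp only [Matrix.neg_mul, Matrix.mul_neg, sub_eq_add_neg] <;> abel

end Matrices

section ElementaryOperations

variable {R n : Type*} [Semiring R] [Fintype n] [DecidableEq n]

lemma updateRow_eq_one_add_single_mul (M : Matrix n n R) (a : R) (r k : n) :
    M.updateRow r (fun s => M r s + a * M k s) = (1 + single r k a) * M := by
  ext i s
  by_cases h : i = r
  · subst h; simp [Matrix.add_mul]
  · simp [Matrix.add_mul, updateRow_ne h, single_mul_apply_of_ne _ _ _ _ _ h]

lemma updateCol_eq_mul_one_add_single (M : Matrix n n R) (a : R) (r k : n) :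
    M.updateCol r (fun i => M i r + M i k * a) = M * (1 + single k r a) := by
  ext i s
  by_cases h : s = r
  · subst h; simp [Matrix.mul_add]
  · simp [Matrix.mul_add, updateCol_ne h, mul_single_apply_of_ne _ _ _ _ _ h]

end ElementaryOperations

section StudyDeterminant

variable {n : Type*} [Fintype n] [DecidableEq n]

lemma sdet_mul (A B : Matrix n n ℍ[ℝ]) : Sdet (A * B) = Sdet A * Sdet B := by
  simp only [Sdet, psi_mul, det_mul]

lemma sdet_one_add_single {r k : n} (hrk : r ≠ k) (a : ℍ[ℝ]) : Sdet (1 + single r k a) = 1 := by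
  have hfactor : single r k a = single r () (1 : ℍ[ℝ]) * single () k a := by
    rw [single_mul_single_same, one_mul]
  have hvanish : single () k a * single r () (1 : ℍ[ℝ]) = 0 :=
    single_mul_single_of_ne _ _ _ _ hrk.symm _
  rw [Sdet, hfactor, psi_add, psi_one, psi_mul, det_one_add_mul_comm, ← psi_mul, hvanish,
    psi_zero, add_zero, det_one]

end StudyDeterminant

theorem sdet_row_col_operation {n : ℕ} (M : Matrix (Fin n) (Fin n) ℍ[ℝ]) (α : ℍ[ℝ])
    (r k : Fin n) (hrk : r ≠ k) :
    Sdet (M.updateRow r (fun s => M r s + α * M k s)) = Sdet M ∧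
    Sdet (M.updateCol r (fun i => M i r + M i k * α)) = Sdet M := by
  refine ⟨?_, ?_⟩
  · rw [updateRow_eq_one_add_single_mul, sdet_mul, sdet_one_add_single hrk, one_mul]
  · rw [updateCol_eq_mul_one_add_single, sdet_mul, sdet_one_add_single hrk.symm, mul_one]
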